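/- If U is a versor (product of invertible vectors) in a Clifford algebra over a quadratic form, and W is a product of vectors satisfying U W U⁻¹ = γ W for a scalar γ, then either the 'norm' W * reverse(W) is zero, or γ² = 1. -/

import Mathlib

/-!
Right-multiplying the hypothesis by `U` turns it into `U W = γ W U`. A product of vectors
`x₁ ⋯ xₙ` has scalar norm `X * reverse X = Q x₁ ⋯ Q xₙ`, so `U W` and `W U` have the same norm
`N(U) N(W)`, while the norm of `γ W U` is `γ² N(U) N(W)`; and `N(U) ≠ 0` since `U` has a
left inverse.
-/

open CliffordAlgebra

namespace CliffordAlgebra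

variable {R M : Type*} [CommRing R] [AddCommGroup M] [Module R M] {Q : QuadraticForm R M}

variable (Q) in
theorem list_prod_map_ι_mul_reverse (l : List M) :
    (l.map (ι Q)).prod * reverse (l.map (ι Q)).prod = algebraMap R _ (l.map Q).prod := by
  induction l with
  | nil => simp
  | cons x xs ih =>
    simp only [List.map_cons, List.prod_cons, reverse.map_mul, reverse_ι, map_mul]
    calc ι Q x * (xs.map (ι Q)).prod * (reverse (xs.map (ι Q)).prod * ι Q x)
        = ι Q x * ((xs.map (ι Q)).prod * reverse (xs.map (ι Q)).prod) * ι Q x := by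
          simp only [mul_assoc]
      _ = algebraMap R _ (Q x) * algebraMap R _ (xs.map Q).prod := by
          rw [ih, mul_assoc, Algebra.commutes, ← mul_assoc, ι_sq_scalar]

theorem ne_zero_of_mul_reverse_eq_algebraMap [Nontrivial (CliffordAlgebra Q)]
    {U Uinv : CliffordAlgebra Q} {d : R} (hinv : Uinv * U = 1)
    (hd : U * reverse U = algebraMap R _ d) : d ≠ 0 := by
  rintro rfl
  have hrev : reverse U = 0 := by
    rw [← one_mul (reverse U), ← hinv, mul_assoc, hd, map_zero, mul_zero]
  have hU : U = 0 := by simpa using congrArg reverse hrev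
  simp [hU] at hinv

end CliffordAlgebra

theorem versor_conjugation_eigenvalue_general {M : Type*} [AddCommGroup M] [Module ℝ M]
    (Q : QuadraticForm ℝ M) (l m : List M) (U W Uinv : CliffordAlgebra Q) (γ : ℝ)
    (hU : U = (l.map (ι Q)).prod)
    (hW : W = (m.map (ι Q)).prod)
    (hUinv' : Uinv * U = 1)
    (hconj : U * W * Uinv = γ • W) :
    W * reverse (Q := Q) W = 0 ∨ γ ^ 2 = 1 := by
  have hd : (l.map Q).prod ≠ 0 :=
    ne_zero_of_mul_reverse_eq_algebraMap hUinv' (hU ▸ list_prod_map_ι_mul_reverse Q l)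
  have hcomm : U * W = γ • (W * U) := by
    rw [← smul_mul_assoc, ← hconj, mul_assoc _ Uinv, hUinv', mul_one]
  have hnorm := congrArg (fun X => X * reverse X) hcomm
  simp only [map_smul, smul_mul_smul_comm] at hnorm
  rw [hU, hW, ← List.prod_append, ← List.prod_append, ← List.map_append, ← List.map_append,
    list_prod_map_ι_mul_reverse, list_prod_map_ι_mul_reverse, Algebra.smul_def, ← map_mul] at hnorm
  have hscalar : γ ^ 2 * ((l.map Q).prod * (m.map Q).prod) = (l.map Q).prod * (m.map Q).prod := by
    have := (algebraMap ℝ (CliffordAlgebra Q)).injective hnorm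
    rw [List.map_append, List.map_append, List.prod_append, List.prod_append] at this
    linear_combination -this
  rw [hW, list_prod_map_ι_mul_reverse, map_eq_zero_iff _ (algebraMap ℝ _).injective]
  obtain hγ | hdc := mul_left_eq_self₀.mp hscalar
  · exact Or.inr hγ
  · exact Or.inl ((mul_eq_zero.mp hdc).resolve_left hd)

/-- If `U` is a versor (product of invertible vectors) in a real Clifford algebra and
`W` is a product of vectors with `U W U⁻¹ = γ W`, then `W * reverse W = 0` or `γ² = 1`. -/
theorem versor_conjugation_eigenvalue {M : Type*} [AddCommGroup M] [Module ℝ M]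
    (Q : QuadraticForm ℝ M) (l m : List M) (U W Uinv : CliffordAlgebra Q) (γ : ℝ)
    (hU : U = (l.map (ι Q)).prod)
    (hUvec : ∀ x ∈ l, IsUnit (ι Q x))
    (hW : W = (m.map (ι Q)).prod)
    (hUinv : U * Uinv = 1) (hUinv' : Uinv * U = 1)
    (hconj : U * W * Uinv = γ • W) :
    W * reverse (Q := Q) W = 0 ∨ γ ^ 2 = 1 :=
  versor_conjugation_eigenvalue_general Q l m U W Uinv γ hU hW hUinv' hconj
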